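/- arXiv:2203.07335 — 3 statements merged into one kernel-verified Lean document; each statement's English description precedes it below -/
import Mathlib

section
/- Let G = Θ_{p,q,r} with p ≤ q ≤ r, where p, q and r are all odd, q ∈ {p, p+2} and r ≥ p+4. Then the set S = {v_{(q−1)/2}, w₁} is a vertex metric generator of G. -/
/-- Vertices of the Θ-graph `Θ_{p,q,r}`: the two branching vertices `u` and `v`,
together with the internal vertices of the three `u`–`v` paths of lengths `p`, `q`, `r`.
`a i` is the internal vertex `u_{i+1}` of the first path, `b i` is `v_{i+1}` of the
second path, and `c i` is `w_{i+1}` of the third path. -/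
inductive ThetaVert (p q r : ℕ) : Type where
  | u : ThetaVert p q r
  | v : ThetaVert p q r
  | a : Fin (p - 1) → ThetaVert p q r
  | b : Fin (q - 1) → ThetaVert p q r
  | c : Fin (r - 1) → ThetaVert p q r
  deriving DecidableEq

/-- Base adjacency relation for the Θ-graph (one direction of each edge). -/
def thetaRel (p q r : ℕ) : ThetaVert p q r → ThetaVert p q r → Prop
  | .u, .v => p = 1 ∨ q = 1 ∨ r = 1
  | .u, .a i => (i : ℕ) = 0
  | .u, .b i => (i : ℕ) = 0
  | .u, .c i => (i : ℕ) = 0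
  | .a i, .v => (i : ℕ) = p - 2
  | .b i, .v => (i : ℕ) = q - 2
  | .c i, .v => (i : ℕ) = r - 2
  | .a i, .a j => (j : ℕ) = (i : ℕ) + 1
  | .b i, .b j => (j : ℕ) = (i : ℕ) + 1
  | .c i, .c j => (j : ℕ) = (i : ℕ) + 1
  | _, _ => False

/-- The Θ-graph `Θ_{p,q,r}`. -/
def thetaGraph (p q r : ℕ) : SimpleGraph (ThetaVert p q r) :=
  SimpleGraph.fromRel (thetaRel p q r)

/-- The vertex `u_i` (for `0 ≤ i ≤ p`) on the first path of `Θ_{p,q,r}`. -/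
def uV (p q r : ℕ) (i : ℕ) : ThetaVert p q r :=
  if h : 0 < i ∧ i < p then ThetaVert.a ⟨i - 1, by omega⟩
  else if i = 0 then ThetaVert.u else ThetaVert.v

/-- The vertex `v_i` (for `0 ≤ i ≤ q`) on the second path of `Θ_{p,q,r}`. -/
def vV (p q r : ℕ) (i : ℕ) : ThetaVert p q r :=
  if h : 0 < i ∧ i < q then ThetaVert.b ⟨i - 1, by omega⟩
  else if i = 0 then ThetaVert.u else ThetaVert.v

/-- The vertex `w_i` (for `0 ≤ i ≤ r`) on the third path of `Θ_{p,q,r}`. -/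
def wV (p q r : ℕ) (i : ℕ) : ThetaVert p q r :=
  if h : 0 < i ∧ i < r then ThetaVert.c ⟨i - 1, by omega⟩
  else if i = 0 then ThetaVert.u else ThetaVert.v

/-- `S` is a vertex metric generator of `G`: every pair of distinct vertices is
distinguished by some vertex of `S`. -/
def IsVertexMetricGenerator {V : Type*} (G : SimpleGraph V) (S : Set V) : Prop :=
  ∀ x x' : V, x ≠ x' → ∃ s ∈ S, G.dist s x ≠ G.dist s x'

/-- The vertex metric dimension of `G`: the least cardinality of a vertex metric generator. -/
noncomputable def vertexMetricDim {V : Type*} (G : SimpleGraph V) : ℕ :=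
  sInf {n : ℕ | ∃ S : Finset V, S.card = n ∧ IsVertexMetricGenerator G ↑S}

/-- Distance from a vertex `x` to an edge `e`: the minimum of the distances to its endpoints. -/
noncomputable def edgeDist {V : Type*} (G : SimpleGraph V) (x : V) (e : Sym2 V) : ℕ :=
  Sym2.lift ⟨fun y z => min (G.dist x y) (G.dist x z), fun _ _ => min_comm _ _⟩ e

/-- `S` is an edge metric generator of `G`: every pair of distinct edges is
distinguished by some vertex of `S`. -/
def IsEdgeMetricGenerator {V : Type*} (G : SimpleGraph V) (S : Set V) : Prop :=
  ∀ e ∈ G.edgeSet, ∀ f ∈ G.edgeSet, e ≠ f → ∃ s ∈ S, edgeDist G s e ≠ edgeDist G s f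

/-- The edge metric dimension of `G`: the least cardinality of an edge metric generator. -/
noncomputable def edgeMetricDim {V : Type*} (G : SimpleGraph V) : ℕ :=
  sInf {n : ℕ | ∃ S : Finset V, S.card = n ∧ IsEdgeMetricGenerator G ↑S}

section ThetaAux

open SimpleGraph

variable {p q r : ℕ}

/-- Distance from `v_{(q-1)/2}` (claimed formula). -/
def d1 (p q r : ℕ) : ThetaVert p q r → ℕ
  | .u => (q-1)/2
  | .v => (q-1)/2 + 1
  | .a i => min ((q-1)/2 + ((i:ℕ)+1)) ((q-1)/2 + 1 + (p - ((i:ℕ)+1)))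
  | .b i => max ((q-1)/2) ((i:ℕ)+1) - min ((q-1)/2) ((i:ℕ)+1)
  | .c i => min ((q-1)/2 + ((i:ℕ)+1)) ((q-1)/2 + 1 + (r - ((i:ℕ)+1)))

/-- Distance from `w_1` (claimed formula). -/
def d2 (p q r : ℕ) : ThetaVert p q r → ℕ
  | .u => 1
  | .v => p + 1
  | .a i => min ((i:ℕ)+2) (p + 1 + (p - ((i:ℕ)+1)))
  | .b i => min ((i:ℕ)+2) (p + 1 + (q - ((i:ℕ)+1)))
  | .c i => min (i:ℕ) (1 + p + (r - ((i:ℕ)+1)))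

lemma lip_d1 (hp : 1 ≤ p) (hpq : p ≤ q) (hqr : q ≤ r) (hq2 : 2 ≤ q)
    (hqo : q % 2 = 1) (hq : q = p ∨ q = p + 2) (hr : p + 4 ≤ r)
    (x y : ThetaVert p q r) (h : thetaRel p q r x y) :
    d1 p q r x ≤ d1 p q r y + 1 ∧ d1 p q r y ≤ d1 p q r x + 1 := by
  rcases x with _ | _ | ⟨i, hi⟩ | ⟨i, hi⟩ | ⟨i, hi⟩ <;>
  rcases y with _ | _ | ⟨j, hj⟩ | ⟨j, hj⟩ | ⟨j, hj⟩ <;>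
  simp only [thetaRel] at h <;>
  simp only [d1, Fin.val_mk] <;> omega

lemma lip_d2 (hp : 1 ≤ p) (hpq : p ≤ q) (hqr : q ≤ r) (hq2 : 2 ≤ q)
    (hqo : q % 2 = 1) (hq : q = p ∨ q = p + 2) (hr : p + 4 ≤ r)
    (x y : ThetaVert p q r) (h : thetaRel p q r x y) :
    d2 p q r x ≤ d2 p q r y + 1 ∧ d2 p q r y ≤ d2 p q r x + 1 := by
  rcases x with _ | _ | ⟨i, hi⟩ | ⟨i, hi⟩ | ⟨i, hi⟩ <;>
  rcases y with _ | _ | ⟨j, hj⟩ | ⟨j, hj⟩ | ⟨j, hj⟩ <;>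
  simp only [thetaRel] at h <;>
  simp only [d2, Fin.val_mk] <;> omega

end ThetaAux

section ThetaWalks

open SimpleGraph

variable {p q r : ℕ}

lemma theta_adj_iff (x y : ThetaVert p q r) :
    (thetaGraph p q r).Adj x y ↔ x ≠ y ∧ (thetaRel p q r x y ∨ thetaRel p q r y x) :=
  SimpleGraph.fromRel_adj _ x y

lemma adj_u_v (h : p = 1 ∨ q = 1 ∨ r = 1) : (thetaGraph p q r).Adj .u .v :=
  (theta_adj_iff _ _).mpr ⟨by simp, Or.inl h⟩

lemma adj_u_a (i : Fin (p-1)) (h : (i:ℕ) = 0) : (thetaGraph p q r).Adj .u (.a i) :=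
  (theta_adj_iff _ _).mpr ⟨by simp, Or.inl h⟩

lemma adj_u_b (i : Fin (q-1)) (h : (i:ℕ) = 0) : (thetaGraph p q r).Adj .u (.b i) :=
  (theta_adj_iff _ _).mpr ⟨by simp, Or.inl h⟩

lemma adj_u_c (i : Fin (r-1)) (h : (i:ℕ) = 0) : (thetaGraph p q r).Adj .u (.c i) :=
  (theta_adj_iff _ _).mpr ⟨by simp, Or.inl h⟩

lemma adj_a_v (i : Fin (p-1)) (h : (i:ℕ) = p - 2) : (thetaGraph p q r).Adj (.a i) .v :=
  (theta_adj_iff _ _).mpr ⟨by simp, Or.inl h⟩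

lemma adj_b_v (i : Fin (q-1)) (h : (i:ℕ) = q - 2) : (thetaGraph p q r).Adj (.b i) .v :=
  (theta_adj_iff _ _).mpr ⟨by simp, Or.inl h⟩

lemma adj_c_v (i : Fin (r-1)) (h : (i:ℕ) = r - 2) : (thetaGraph p q r).Adj (.c i) .v :=
  (theta_adj_iff _ _).mpr ⟨by simp, Or.inl h⟩

lemma adj_a_a (i j : Fin (p-1)) (h : (j:ℕ) = (i:ℕ) + 1) :
    (thetaGraph p q r).Adj (.a i) (.a j) :=
  (theta_adj_iff _ _).mpr
    ⟨by intro hh; injection hh with h2; subst h2; omega, Or.inl h⟩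

lemma adj_b_b (i j : Fin (q-1)) (h : (j:ℕ) = (i:ℕ) + 1) :
    (thetaGraph p q r).Adj (.b i) (.b j) :=
  (theta_adj_iff _ _).mpr
    ⟨by intro hh; injection hh with h2; subst h2; omega, Or.inl h⟩

lemma adj_c_c (i j : Fin (r-1)) (h : (j:ℕ) = (i:ℕ) + 1) :
    (thetaGraph p q r).Adj (.c i) (.c j) :=
  (theta_adj_iff _ _).mpr
    ⟨by intro hh; injection hh with h2; subst h2; omega, Or.inl h⟩

lemma uV_zero : uV p q r 0 = .u := by
  unfold uV; rw [dif_neg (by omega), if_pos rfl]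

lemma uV_last (hp : 1 ≤ p) : uV p q r p = .v := by
  unfold uV; rw [dif_neg (by omega), if_neg (by omega)]

lemma uV_mid {i : ℕ} (h1 : 0 < i) (h2 : i < p) : uV p q r i = .a ⟨i - 1, by omega⟩ := by
  unfold uV; rw [dif_pos ⟨h1, h2⟩]

lemma vV_zero : vV p q r 0 = .u := by
  unfold vV; rw [dif_neg (by omega), if_pos rfl]

lemma vV_last (hq : 1 ≤ q) : vV p q r q = .v := by
  unfold vV; rw [dif_neg (by omega), if_neg (by omega)]

lemma vV_mid {i : ℕ} (h1 : 0 < i) (h2 : i < q) : vV p q r i = .b ⟨i - 1, by omega⟩ := by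
  unfold vV; rw [dif_pos ⟨h1, h2⟩]

lemma wV_zero : wV p q r 0 = .u := by
  unfold wV; rw [dif_neg (by omega), if_pos rfl]

lemma wV_last (hr : 1 ≤ r) : wV p q r r = .v := by
  unfold wV; rw [dif_neg (by omega), if_neg (by omega)]

lemma wV_mid {i : ℕ} (h1 : 0 < i) (h2 : i < r) : wV p q r i = .c ⟨i - 1, by omega⟩ := by
  unfold wV; rw [dif_pos ⟨h1, h2⟩]

lemma adj_uV (k : ℕ) (hk : k < p) :
    (thetaGraph p q r).Adj (uV p q r k) (uV p q r (k+1)) := by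
  rcases Nat.eq_zero_or_pos k with rfl | hk0
  · rcases Nat.lt_or_ge 1 p with h2 | h2
    · rw [uV_zero, uV_mid (by omega) (by omega)]
      exact adj_u_a _ (by simp)
    · have hp1 : p = 1 := by omega
      rw [uV_zero, show (0+1 : ℕ) = p from by omega, uV_last (by omega)]
      exact adj_u_v (Or.inl hp1)
  · rcases Nat.lt_or_ge (k+1) p with h2 | h2
    · rw [uV_mid hk0 hk, uV_mid (by omega) h2]
      exact adj_a_a _ _ (by simp; omega)
    · have : k + 1 = p := by omega
      rw [uV_mid hk0 hk, this, uV_last (by omega)]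
      exact adj_a_v _ (by simp; omega)

lemma adj_vV (k : ℕ) (hk : k < q) :
    (thetaGraph p q r).Adj (vV p q r k) (vV p q r (k+1)) := by
  rcases Nat.eq_zero_or_pos k with rfl | hk0
  · rcases Nat.lt_or_ge 1 q with h2 | h2
    · rw [vV_zero, vV_mid (by omega) (by omega)]
      exact adj_u_b _ (by simp)
    · have hq1 : q = 1 := by omega
      rw [vV_zero, show (0+1 : ℕ) = q from by omega, vV_last (by omega)]
      exact adj_u_v (Or.inr (Or.inl hq1))
  · rcases Nat.lt_or_ge (k+1) q with h2 | h2
    · rw [vV_mid hk0 hk, vV_mid (by omega) h2]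
      exact adj_b_b _ _ (by simp; omega)
    · have : k + 1 = q := by omega
      rw [vV_mid hk0 hk, this, vV_last (by omega)]
      exact adj_b_v _ (by simp; omega)

lemma adj_wV (k : ℕ) (hk : k < r) :
    (thetaGraph p q r).Adj (wV p q r k) (wV p q r (k+1)) := by
  rcases Nat.eq_zero_or_pos k with rfl | hk0
  · rcases Nat.lt_or_ge 1 r with h2 | h2
    · rw [wV_zero, wV_mid (by omega) (by omega)]
      exact adj_u_c _ (by simp)
    · have hr1 : r = 1 := by omega
      rw [wV_zero, show (0+1 : ℕ) = r from by omega, wV_last (by omega)]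
      exact adj_u_v (Or.inr (Or.inr hr1))
  · rcases Nat.lt_or_ge (k+1) r with h2 | h2
    · rw [wV_mid hk0 hk, wV_mid (by omega) h2]
      exact adj_c_c _ _ (by simp; omega)
    · have : k + 1 = r := by omega
      rw [wV_mid hk0 hk, this, wV_last (by omega)]
      exact adj_c_v _ (by simp; omega)

/-- A chain of adjacent vertices gives a walk. -/
lemma walk_chain {V : Type*} {G : SimpleGraph V} (f : ℕ → V) :
    ∀ n m, m ≤ n → (∀ k, m ≤ k → k < n → G.Adj (f k) (f (k+1))) →
      ∃ w : G.Walk (f m) (f n), w.length = n - m := by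
  intro n
  induction n with
  | zero =>
    intro m hm _
    obtain rfl : m = 0 := by omega
    exact ⟨.nil, rfl⟩
  | succ n ih =>
    intro m hm hadj
    rcases Nat.lt_or_ge m (n+1) with h | h
    · obtain ⟨w, hw⟩ := ih m (by omega) (fun k h1 h2 => hadj k h1 (by omega))
      exact ⟨w.concat (hadj n (by omega) (by omega)),
        by rw [SimpleGraph.Walk.length_concat]; omega⟩
    · obtain rfl : m = n + 1 := by omega
      exact ⟨.nil, by rw [SimpleGraph.Walk.length_nil]; omega⟩

lemma dist_uV (i j : ℕ) (hij : i ≤ j) (hj : j ≤ p) :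
    (thetaGraph p q r).dist (uV p q r i) (uV p q r j) ≤ j - i := by
  obtain ⟨w, hw⟩ := walk_chain (uV p q r) j i hij (fun k _ h2 => adj_uV k (by omega))
  exact hw ▸ SimpleGraph.dist_le w

lemma dist_vV (i j : ℕ) (hij : i ≤ j) (hj : j ≤ q) :
    (thetaGraph p q r).dist (vV p q r i) (vV p q r j) ≤ j - i := by
  obtain ⟨w, hw⟩ := walk_chain (vV p q r) j i hij (fun k _ h2 => adj_vV k (by omega))
  exact hw ▸ SimpleGraph.dist_le w

lemma dist_wV (i j : ℕ) (hij : i ≤ j) (hj : j ≤ r) :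
    (thetaGraph p q r).dist (wV p q r i) (wV p q r j) ≤ j - i := by
  obtain ⟨w, hw⟩ := walk_chain (wV p q r) j i hij (fun k _ h2 => adj_wV k (by omega))
  exact hw ▸ SimpleGraph.dist_le w

lemma reach_uV (i j : ℕ) (hij : i ≤ j) (hj : j ≤ p) :
    (thetaGraph p q r).Reachable (uV p q r i) (uV p q r j) := by
  obtain ⟨w, _⟩ := walk_chain (uV p q r) j i hij (fun k _ h2 => adj_uV k (by omega))
  exact ⟨w⟩

lemma reach_vV (i j : ℕ) (hij : i ≤ j) (hj : j ≤ q) :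
    (thetaGraph p q r).Reachable (vV p q r i) (vV p q r j) := by
  obtain ⟨w, _⟩ := walk_chain (vV p q r) j i hij (fun k _ h2 => adj_vV k (by omega))
  exact ⟨w⟩

lemma reach_wV (i j : ℕ) (hij : i ≤ j) (hj : j ≤ r) :
    (thetaGraph p q r).Reachable (wV p q r i) (wV p q r j) := by
  obtain ⟨w, _⟩ := walk_chain (wV p q r) j i hij (fun k _ h2 => adj_wV k (by omega))
  exact ⟨w⟩

lemma theta_connected (hp : 1 ≤ p) (hpq : p ≤ q) (hqr : q ≤ r) :
    (thetaGraph p q r).Connected := by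
  rw [SimpleGraph.connected_iff]
  have key : ∀ z : ThetaVert p q r, (thetaGraph p q r).Reachable .u z := by
    intro z
    rcases z with _ | _ | ⟨i, hi⟩ | ⟨i, hi⟩ | ⟨i, hi⟩
    · exact SimpleGraph.Reachable.refl _
    · have := reach_uV (p := p) (q := q) (r := r) 0 p (by omega) le_rfl
      rwa [uV_zero, uV_last hp] at this
    · have := reach_uV (p := p) (q := q) (r := r) 0 (i+1) (by omega) (by omega)
      rw [uV_zero, uV_mid (by omega) (by omega)] at this
      exact this
    · have := reach_vV (p := p) (q := q) (r := r) 0 (i+1) (by omega) (by omega)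
      rw [vV_zero, vV_mid (by omega) (by omega)] at this
      exact this
    · have := reach_wV (p := p) (q := q) (r := r) 0 (i+1) (by omega) (by omega)
      rw [wV_zero, wV_mid (by omega) (by omega)] at this
      exact this
  exact ⟨fun x y => (key x).symm.trans (key y), ⟨.u⟩⟩

end ThetaWalks

section ThetaDist

open SimpleGraph

variable {p q r : ℕ}

lemma dist_u_a (i : Fin (p-1)) : (thetaGraph p q r).dist .u (.a i) ≤ (i:ℕ)+1 := by
  have h := dist_uV (p := p) (q := q) (r := r) 0 ((i:ℕ)+1) (by omega) (by omega)
  rwa [uV_zero, uV_mid (by omega) (by omega)] at h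

lemma dist_u_b (i : Fin (q-1)) : (thetaGraph p q r).dist .u (.b i) ≤ (i:ℕ)+1 := by
  have h := dist_vV (p := p) (q := q) (r := r) 0 ((i:ℕ)+1) (by omega) (by omega)
  rwa [vV_zero, vV_mid (by omega) (by omega)] at h

lemma dist_u_c (i : Fin (r-1)) : (thetaGraph p q r).dist .u (.c i) ≤ (i:ℕ)+1 := by
  have h := dist_wV (p := p) (q := q) (r := r) 0 ((i:ℕ)+1) (by omega) (by omega)
  rwa [wV_zero, wV_mid (by omega) (by omega)] at h

lemma dist_a_v (i : Fin (p-1)) : (thetaGraph p q r).dist (.a i) .v ≤ p - ((i:ℕ)+1) := by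
  have h := dist_uV (p := p) (q := q) (r := r) ((i:ℕ)+1) p (by omega) le_rfl
  rwa [uV_last (by omega), uV_mid (by omega) (by omega)] at h

lemma dist_b_v (i : Fin (q-1)) : (thetaGraph p q r).dist (.b i) .v ≤ q - ((i:ℕ)+1) := by
  have h := dist_vV (p := p) (q := q) (r := r) ((i:ℕ)+1) q (by omega) le_rfl
  rwa [vV_last (by omega), vV_mid (by omega) (by omega)] at h

lemma dist_c_v (i : Fin (r-1)) : (thetaGraph p q r).dist (.c i) .v ≤ r - ((i:ℕ)+1) := by
  have h := dist_wV (p := p) (q := q) (r := r) ((i:ℕ)+1) r (by omega) le_rfl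
  rwa [wV_last (by omega), wV_mid (by omega) (by omega)] at h

lemma dist_u_v' (hp : 1 ≤ p) : (thetaGraph p q r).dist .u .v ≤ p := by
  have h := dist_uV (p := p) (q := q) (r := r) 0 p (by omega) le_rfl
  rwa [uV_zero, uV_last hp] at h

/-- Upper bound for distances from `v_{(q-1)/2}`. -/
lemma dist_s1_le (hp : 1 ≤ p) (hpq : p ≤ q) (hqr : q ≤ r) (hq2 : 2 ≤ q)
    (hqo : q % 2 = 1) (x : ThetaVert p q r) :
    (thetaGraph p q r).dist (vV p q r ((q-1)/2)) x ≤ d1 p q r x := by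
  set m := (q-1)/2 with hm
  have hq3 : 3 ≤ q := by omega
  have hm1 : 1 ≤ m := by omega
  have hmq : m < q := by omega
  have hconn := theta_connected (p := p) (q := q) (r := r) hp hpq hqr
  have hdu : (thetaGraph p q r).dist (vV p q r m) .u ≤ m := by
    rw [SimpleGraph.dist_comm]
    have h := dist_vV (p := p) (q := q) (r := r) 0 m (by omega) (by omega)
    rw [vV_zero] at h
    exact le_trans h (by omega)
  have hdv : (thetaGraph p q r).dist (vV p q r m) .v ≤ m + 1 := by
    have h := dist_vV (p := p) (q := q) (r := r) m q (by omega) le_rfl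
    rw [vV_last (by omega)] at h
    exact le_trans h (by omega)
  rcases x with _ | _ | ⟨i, hi⟩ | ⟨i, hi⟩ | ⟨i, hi⟩
  · simpa [d1] using hdu
  · simpa [d1] using hdv
  · have h1 : (thetaGraph p q r).dist (vV p q r m) (.a ⟨i, hi⟩) ≤ m + (i+1) := by
      refine le_trans (hconn.dist_triangle (v := .u)) ?_
      have := dist_u_a (p := p) (q := q) (r := r) ⟨i, hi⟩
      simp only [Fin.val_mk] at this
      omega
    have h2 : (thetaGraph p q r).dist (vV p q r m) (.a ⟨i, hi⟩) ≤ m + 1 + (p - (i+1)) := by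
      refine le_trans (hconn.dist_triangle (v := .v)) ?_
      have h3 := dist_a_v (p := p) (q := q) (r := r) ⟨i, hi⟩
      rw [SimpleGraph.dist_comm (u := ThetaVert.a ⟨i, hi⟩)] at h3
      simp only [Fin.val_mk] at h3
      omega
    simp only [d1, Fin.val_mk]
    omega
  · have hx : (ThetaVert.b ⟨i, hi⟩ : ThetaVert p q r) = vV p q r (i+1) := by
      rw [vV_mid (by omega) (by omega)]
      rfl
    simp only [d1, Fin.val_mk]
    rcases Nat.le_total (i+1) m with hle | hle
    · have h := dist_vV (p := p) (q := q) (r := r) (i+1) m hle (by omega)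
      rw [SimpleGraph.dist_comm, hx]
      omega
    · have h := dist_vV (p := p) (q := q) (r := r) m (i+1) hle (by omega)
      rw [hx]
      omega
  · have h1 : (thetaGraph p q r).dist (vV p q r m) (.c ⟨i, hi⟩) ≤ m + (i+1) := by
      refine le_trans (hconn.dist_triangle (v := .u)) ?_
      have := dist_u_c (p := p) (q := q) (r := r) ⟨i, hi⟩
      simp only [Fin.val_mk] at this
      omega
    have h2 : (thetaGraph p q r).dist (vV p q r m) (.c ⟨i, hi⟩) ≤ m + 1 + (r - (i+1)) := by
      refine le_trans (hconn.dist_triangle (v := .v)) ?_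
      have h3 := dist_c_v (p := p) (q := q) (r := r) ⟨i, hi⟩
      rw [SimpleGraph.dist_comm (u := ThetaVert.c ⟨i, hi⟩)] at h3
      simp only [Fin.val_mk] at h3
      omega
    simp only [d1, Fin.val_mk]
    omega

/-- Upper bound for distances from `w_1`. -/
lemma dist_s2_le (hp : 1 ≤ p) (hpq : p ≤ q) (hqr : q ≤ r) (hq2 : 2 ≤ q)
    (hr4 : p + 4 ≤ r) (x : ThetaVert p q r) :
    (thetaGraph p q r).dist (wV p q r 1) x ≤ d2 p q r x := by
  have hconn := theta_connected (p := p) (q := q) (r := r) hp hpq hqr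
  have hdu : (thetaGraph p q r).dist (wV p q r 1) .u ≤ 1 := by
    rw [SimpleGraph.dist_comm]
    have h := dist_wV (p := p) (q := q) (r := r) 0 1 (by omega) (by omega)
    rw [wV_zero] at h
    exact le_trans h (by omega)
  have hdv : (thetaGraph p q r).dist (wV p q r 1) .v ≤ p + 1 := by
    refine le_trans (hconn.dist_triangle (v := .u)) ?_
    have := dist_u_v' (p := p) (q := q) (r := r) hp
    omega
  rcases x with _ | _ | ⟨i, hi⟩ | ⟨i, hi⟩ | ⟨i, hi⟩
  · simpa [d2] using hdu
  · simpa [d2] using hdv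
  · have h1 : (thetaGraph p q r).dist (wV p q r 1) (.a ⟨i, hi⟩) ≤ 1 + (i+1) := by
      refine le_trans (hconn.dist_triangle (v := .u)) ?_
      have := dist_u_a (p := p) (q := q) (r := r) ⟨i, hi⟩
      simp only [Fin.val_mk] at this
      omega
    have h2 : (thetaGraph p q r).dist (wV p q r 1) (.a ⟨i, hi⟩) ≤ p + 1 + (p - (i+1)) := by
      refine le_trans (hconn.dist_triangle (v := .v)) ?_
      have h3 := dist_a_v (p := p) (q := q) (r := r) ⟨i, hi⟩
      rw [SimpleGraph.dist_comm (u := ThetaVert.a ⟨i, hi⟩)] at h3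
      simp only [Fin.val_mk] at h3
      omega
    simp only [d2, Fin.val_mk]
    omega
  · have h1 : (thetaGraph p q r).dist (wV p q r 1) (.b ⟨i, hi⟩) ≤ 1 + (i+1) := by
      refine le_trans (hconn.dist_triangle (v := .u)) ?_
      have := dist_u_b (p := p) (q := q) (r := r) ⟨i, hi⟩
      simp only [Fin.val_mk] at this
      omega
    have h2 : (thetaGraph p q r).dist (wV p q r 1) (.b ⟨i, hi⟩) ≤ p + 1 + (q - (i+1)) := by
      refine le_trans (hconn.dist_triangle (v := .v)) ?_
      have h3 := dist_b_v (p := p) (q := q) (r := r) ⟨i, hi⟩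
      rw [SimpleGraph.dist_comm (u := ThetaVert.b ⟨i, hi⟩)] at h3
      simp only [Fin.val_mk] at h3
      omega
    simp only [d2, Fin.val_mk]
    omega
  · have hx : (ThetaVert.c ⟨i, hi⟩ : ThetaVert p q r) = wV p q r (i+1) := by
      rw [wV_mid (by omega) (by omega)]
      rfl
    have h1 : (thetaGraph p q r).dist (wV p q r 1) (.c ⟨i, hi⟩) ≤ i := by
      have h := dist_wV (p := p) (q := q) (r := r) 1 (i+1) (by omega) (by omega)
      rw [hx]
      omega
    have h2 : (thetaGraph p q r).dist (wV p q r 1) (.c ⟨i, hi⟩) ≤ 1 + p + (r - (i+1)) := by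
      refine le_trans (hconn.dist_triangle (v := .u)) ?_
      refine le_trans (add_le_add hdu (hconn.dist_triangle (v := .v))) ?_
      have h3 := dist_c_v (p := p) (q := q) (r := r) ⟨i, hi⟩
      rw [SimpleGraph.dist_comm (u := ThetaVert.c ⟨i, hi⟩)] at h3
      simp only [Fin.val_mk] at h3
      have h4 := dist_u_v' (p := p) (q := q) (r := r) hp
      omega
    simp only [d2, Fin.val_mk]
    omega

/-- Along a walk, a Lipschitz function grows by at most the length. -/
lemma walk_lower {V : Type*} {G : SimpleGraph V} (g : V → ℕ)
    (hlip : ∀ x y, G.Adj x y → g y ≤ g x + 1) {s x : V} (w : G.Walk s x) :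
    g x ≤ g s + w.length := by
  induction w with
  | nil => simp
  | cons h w ih =>
    have := hlip _ _ h
    rw [SimpleGraph.Walk.length_cons]
    omega

lemma dist_lower {V : Type*} {G : SimpleGraph V} (g : V → ℕ)
    (hlip : ∀ x y, G.Adj x y → g y ≤ g x + 1) {s x : V}
    (hreach : G.Reachable s x) (hs : g s = 0) : g x ≤ G.dist s x := by
  obtain ⟨w, hw⟩ := hreach.exists_walk_length_eq_dist
  have := walk_lower g hlip w
  omega

lemma dist_s1_eq (hp : 1 ≤ p) (hpq : p ≤ q) (hqr : q ≤ r) (hq2 : 2 ≤ q)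
    (hqo : q % 2 = 1) (hq : q = p ∨ q = p + 2) (hr : p + 4 ≤ r) (x : ThetaVert p q r) :
    (thetaGraph p q r).dist (vV p q r ((q-1)/2)) x = d1 p q r x := by
  have hconn := theta_connected (p := p) (q := q) (r := r) hp hpq hqr
  refine le_antisymm (dist_s1_le hp hpq hqr hq2 hqo x) ?_
  refine dist_lower _ ?_ (hconn _ _) ?_
  · intro a b hab
    obtain ⟨-, h | h⟩ := (theta_adj_iff a b).1 hab
    · exact (lip_d1 hp hpq hqr hq2 hqo hq hr a b h).2
    · exact (lip_d1 hp hpq hqr hq2 hqo hq hr b a h).1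
  · rw [vV_mid (by omega) (by omega)]
    simp only [d1, Fin.val_mk]
    omega

lemma dist_s2_eq (hp : 1 ≤ p) (hpq : p ≤ q) (hqr : q ≤ r) (hq2 : 2 ≤ q)
    (hqo : q % 2 = 1) (hq : q = p ∨ q = p + 2) (hr : p + 4 ≤ r) (x : ThetaVert p q r) :
    (thetaGraph p q r).dist (wV p q r 1) x = d2 p q r x := by
  have hconn := theta_connected (p := p) (q := q) (r := r) hp hpq hqr
  refine le_antisymm (dist_s2_le hp hpq hqr hq2 hr x) ?_
  refine dist_lower _ ?_ (hconn _ _) ?_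
  · intro a b hab
    obtain ⟨-, h | h⟩ := (theta_adj_iff a b).1 hab
    · exact (lip_d2 hp hpq hqr hq2 hqo hq hr a b h).2
    · exact (lip_d2 hp hpq hqr hq2 hqo hq hr b a h).1
  · rw [wV_mid (by omega) (by omega)]
    simp only [d2, Fin.val_mk]
    omega

end ThetaDist

set_option maxHeartbeats 1000000 in
/-- in `Θ_{p,q,r}` with `1 ≤ p ≤ q ≤ r`, `q ≥ 2`, all of `p`, `q`,
`r` odd, `q ∈ {p, p+2}` and `r ≥ p+4`, the set `{v_{(q-1)/2}, w₁}` is a vertex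
metric generator. -/
theorem isVertexGenerator_case_vii (p q r : ℕ)
    (hp : 1 ≤ p) (hpq : p ≤ q) (hqr : q ≤ r) (hq2 : 2 ≤ q)
    (hpo : Odd p) (hqo : Odd q) (hro : Odd r)
    (hq : q = p ∨ q = p + 2) (hr : p + 4 ≤ r) :
    IsVertexMetricGenerator (thetaGraph p q r)
      {vV p q r ((q - 1) / 2), wV p q r 1} := by
  intro x x' hne
  by_contra hcon
  push_neg at hcon
  have hpo' : p % 2 = 1 := Nat.odd_iff.mp hpo
  have hqo' : q % 2 = 1 := Nat.odd_iff.mp hqo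
  have hro' : r % 2 = 1 := Nat.odd_iff.mp hro
  have h1 := hcon _ (Set.mem_insert _ _)
  have h2 := hcon _ (Set.mem_insert_of_mem _ rfl)
  rw [dist_s1_eq hp hpq hqr hq2 hqo' hq hr x, dist_s1_eq hp hpq hqr hq2 hqo' hq hr x'] at h1
  rw [dist_s2_eq hp hpq hqr hq2 hqo' hq hr x, dist_s2_eq hp hpq hqr hq2 hqo' hq hr x'] at h2
  rcases x with _ | _ | ⟨i, hi⟩ | ⟨i, hi⟩ | ⟨i, hi⟩ <;>
  rcases x' with _ | _ | ⟨j, hj⟩ | ⟨j, hj⟩ | ⟨j, hj⟩ <;>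
  (try simp only [ne_eq, ThetaVert.a.injEq, ThetaVert.b.injEq, ThetaVert.c.injEq,
    Fin.mk.injEq, eq_self_iff_true, not_true] at hne) <;>
  (try simp only [d1, d2, Fin.val_mk] at h1 h2) <;>
  omega
end

section
/- Let G = Θ_{p,q,r} with p ≤ q ≤ r, where p, q and r are all odd and q = r = p+2. Then the set S = {v₁, w₁} is a vertex metric generator of G. -/
/-! A function `D` that vanishes only at `s`, grows by at most one along every edge, and at every
other vertex drops by one along some edge is the distance from `s`. In `Θ_{p,p+2,p+2}` this
identifies the distance from `v₁`: it is `i + 1` at `u_i` (`0 ≤ i ≤ p`) and at the inner `w_i`,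
and `i - 1` at the inner `v_i`; at `v` both routes, along `P₂` and through `u` along `P₁`, have
length `p + 1`. Exchanging `P₂` and `P₃` is an automorphism taking `v₁` to `w₁`, so the pairs
`(d(v₁, x), d(w₁, x))` are `(i + 1, i + 1)` on `P₁`, `(i - 1, i + 1)` inside `P₂` and
`(i + 1, i - 1)` inside `P₃`; these are pairwise distinct once `p ≥ 1` separates `u` from `v`. -/

open SimpleGraph

namespace SimpleGraph

variable {V V' : Type*} {G : SimpleGraph V} {G' : SimpleGraph V'}

lemma edist_map_le (f : G →g G') (u v : V) : G'.edist (f u) (f v) ≤ G.edist u v := by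
  rw [edist_eq_sInf (G := G)]
  refine le_sInf ?_
  rintro _ ⟨w, rfl⟩
  simpa using edist_le (w.map f)

lemma Iso.dist_eq (e : G ≃g G') (u v : V) : G'.dist (e u) (e v) = G.dist u v := by
  refine congrArg ENat.toNat (le_antisymm (edist_map_le e.toHom u v) ?_)
  simpa using edist_map_le e.symm.toHom (e u) (e v)

lemma le_add_length_of_adj_le {D : V → ℕ} (hD : ∀ x y, G.Adj x y → D y ≤ D x + 1)
    {a b : V} (w : G.Walk a b) : D b ≤ D a + w.length := by
  induction w with
  | nil => simp
  | cons h _ ih => have := hD _ _ h; simp only [Walk.length_cons]; omega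

lemma exists_walk_length_eq_of_descent {D : V → ℕ} {s : V} (hzero : ∀ x, D x = 0 ↔ x = s)
    (hdown : ∀ x, D x ≠ 0 → ∃ y, G.Adj x y ∧ D y + 1 = D x) (x : V) :
    ∃ w : G.Walk x s, w.length = D x := by
  induction hx : D x generalizing x with
  | zero => obtain rfl := (hzero x).1 hx; exact ⟨.nil, rfl⟩
  | succ n ih =>
    obtain ⟨y, hxy, hy⟩ := hdown x (by omega)
    obtain ⟨w, hw⟩ := ih y (by omega)
    exact ⟨.cons hxy w, by simp [hw]⟩

theorem dist_eq_of_descent {D : V → ℕ} {s : V} (hzero : ∀ x, D x = 0 ↔ x = s)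
    (hD : ∀ x y, G.Adj x y → D y ≤ D x + 1)
    (hdown : ∀ x, D x ≠ 0 → ∃ y, G.Adj x y ∧ D y + 1 = D x) (x : V) :
    G.dist s x = D x := by
  obtain ⟨w, hw⟩ := exists_walk_length_eq_of_descent hzero hdown x
  obtain ⟨w', hw'⟩ := Reachable.exists_walk_length_eq_dist ⟨w.reverse⟩
  refine le_antisymm (hw ▸ w.length_reverse ▸ dist_le w.reverse) ?_
  simpa [(hzero s).2 rfl, hw'] using le_add_length_of_adj_le hD w'

end SimpleGraph

namespace ThetaVert

variable {p q : ℕ}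

def swapBC : ThetaVert p q q → ThetaVert p q q
  | .b i => .c i
  | .c i => .b i
  | x => x

@[simp] lemma swapBC_swapBC (x : ThetaVert p q q) : x.swapBC.swapBC = x := by
  cases x <;> rfl

end ThetaVert

def thetaSwapBC (p q : ℕ) : thetaGraph p q q ≃g thetaGraph p q q where
  toFun := ThetaVert.swapBC
  invFun := ThetaVert.swapBC
  left_inv := ThetaVert.swapBC_swapBC
  right_inv := ThetaVert.swapBC_swapBC
  map_rel_iff' {x y} := by
    cases x <;> cases y <;> simp [thetaGraph, thetaRel, ThetaVert.swapBC]

def distFromV1 (p : ℕ) : ThetaVert p (p + 2) (p + 2) → ℕ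
  | .u => 1
  | .v => p + 1
  | .a j => j + 2
  | .b j => j
  | .c j => j + 2

lemma thetaGraph_dist_b_zero (p : ℕ) (x : ThetaVert p (p + 2) (p + 2)) :
    (thetaGraph p (p + 2) (p + 2)).dist (.b ⟨0, by omega⟩) x = distFromV1 p x := by
  apply dist_eq_of_descent
  · intro x
    cases x <;> simp only [distFromV1, reduceCtorEq, ThetaVert.b.injEq, Fin.ext_iff]
  · intro x y hxy
    obtain ⟨-, h⟩ := (fromRel_adj _ _ _).mp hxy
    cases x <;> cases y <;> simp only [thetaRel, distFromV1] at h ⊢ <;> grind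
  · intro x hx
    cases x with
    | u => exact ⟨.b ⟨0, by omega⟩, by simp [thetaGraph, thetaRel], rfl⟩
    | v => exact ⟨.b ⟨p, by omega⟩, by simp [thetaGraph, thetaRel], rfl⟩
    | a j =>
      obtain ⟨_ | k, hk⟩ := j
      · exact ⟨.u, by simp [thetaGraph, thetaRel], rfl⟩
      · exact ⟨.a ⟨k, by omega⟩, by simp [thetaGraph, thetaRel], rfl⟩
    | b j =>
      obtain ⟨_ | k, hk⟩ := j
      · simp [distFromV1] at hx
      · exact ⟨.b ⟨k, by omega⟩, by simp [thetaGraph, thetaRel], rfl⟩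
    | c j =>
      obtain ⟨_ | k, hk⟩ := j
      · exact ⟨.u, by simp [thetaGraph, thetaRel], rfl⟩
      · exact ⟨.c ⟨k, by omega⟩, by simp [thetaGraph, thetaRel], rfl⟩

lemma thetaGraph_dist_c_zero (p : ℕ) (x : ThetaVert p (p + 2) (p + 2)) :
    (thetaGraph p (p + 2) (p + 2)).dist (.c ⟨0, by omega⟩) x = distFromV1 p x.swapBC := by
  rw [← thetaGraph_dist_b_zero, ← (thetaSwapBC p (p + 2)).dist_eq]
  simp [thetaSwapBC, ThetaVert.swapBC]

lemma eq_of_distFromV1_eq {p : ℕ} (hp : 1 ≤ p) {x y : ThetaVert p (p + 2) (p + 2)}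
    (h : distFromV1 p x = distFromV1 p y) (h' : distFromV1 p x.swapBC = distFromV1 p y.swapBC) :
    x = y := by
  cases x <;> cases y <;>
    simp only [distFromV1, ThetaVert.swapBC, ThetaVert.a.injEq, ThetaVert.b.injEq,
      ThetaVert.c.injEq, Fin.ext_iff] at h h' ⊢ <;> omega

theorem isVertexGenerator_case_viii_general (p q r : ℕ)
    (hp : 1 ≤ p) (hq : q = p + 2) (hr : r = p + 2) :
    IsVertexMetricGenerator (thetaGraph p q r)
      {vV p q r 1, wV p q r 1} := by
  subst hq hr
  have hv1 : vV p (p + 2) (p + 2) 1 = .b ⟨0, by omega⟩ := dif_pos (by omega)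
  have hw1 : wV p (p + 2) (p + 2) 1 = .c ⟨0, by omega⟩ := dif_pos (by omega)
  intro x y hxy
  by_contra! h
  simp only [Set.mem_insert_iff, Set.mem_singleton_iff, forall_eq_or_imp, forall_eq, hv1, hw1,
    thetaGraph_dist_b_zero, thetaGraph_dist_c_zero] at h
  exact hxy (eq_of_distFromV1_eq hp h.1 h.2)

/-- in `Θ_{p,q,r}` with `1 ≤ p ≤ q ≤ r`, `q ≥ 2`, all of `p`, `q`,
`r` odd and `q = r = p+2`, the set `{v₁, w₁}` is a vertex metric generator. -/
theorem isVertexGenerator_case_viii (p q r : ℕ)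
    (hp : 1 ≤ p) (hpq : p ≤ q) (hqr : q ≤ r) (hq2 : 2 ≤ q)
    (hpo : Odd p) (hqo : Odd q) (hro : Odd r)
    (hq : q = p + 2) (hr : r = p + 2) :
    IsVertexMetricGenerator (thetaGraph p q r)
      {vV p q r 1, wV p q r 1} :=
  isVertexGenerator_case_viii_general p q r hp hq hr
end

section
/- Let G = Θ_{p,q,r} with p ≤ q ≤ r, where p = q and r ≥ p + 3. Then the set S = {v₁, w₁} is an edge metric generator of G. -/
/-! ### Auxiliary machinery -/

section DistEq

variable {V : Type*} (G : SimpleGraph V)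

/-- If `D` is a certified distance profile from `s`, then `G.dist s · = D`. -/
theorem dist_eq_of_D (s : V) (D : V → ℕ)
    (h0 : D s = 0)
    (huniq : ∀ x, D x = 0 → x = s)
    (hlip : ∀ x y, G.Adj x y → D y ≤ D x + 1)
    (hdec : ∀ x, D x ≠ 0 → ∃ y, G.Adj y x ∧ D y + 1 = D x)
    (x : V) : G.dist s x = D x := by
  have hub : ∀ n x, D x = n → G.Reachable s x ∧ G.dist s x ≤ D x := by
    intro n
    induction n using Nat.strong_induction_on with
    | _ n ih =>
      intro x hx
      by_cases hz : D x = 0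
      · rcases huniq x hz with rfl
        exact ⟨SimpleGraph.Reachable.refl _, by simp [hz]⟩
      · obtain ⟨y, hadj, hy⟩ := hdec x hz
        obtain ⟨hre, hd⟩ := ih (D y) (by omega) y rfl
        obtain ⟨w, hw⟩ := hre.exists_walk_length_eq_dist
        have h1 : G.dist s x ≤ (w.concat hadj).length := SimpleGraph.dist_le _
        rw [SimpleGraph.Walk.length_concat] at h1
        exact ⟨⟨w.concat hadj⟩, by omega⟩
  have hlb : ∀ (a b : V) (w : G.Walk a b), D b ≤ D a + w.length := by
    intro a b w
    induction w with
    | nil => simp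
    | cons h w ih =>
      have := hlip _ _ h
      simp only [SimpleGraph.Walk.length_cons]
      omega
  obtain ⟨hre, hd⟩ := hub (D x) x rfl
  obtain ⟨w, hw⟩ := hre.exists_walk_length_eq_dist
  have := hlb s x w
  omega

end DistEq

/-- Distance profile from `v₁ = b 0` in `Θ_{p,q,r}` (case `p = q ≥ 2`, `r ≥ q + 3`). -/
def dB (p q r : ℕ) : ThetaVert p q r → ℕ
  | .u => 1
  | .v => q - 1
  | .a i => min ((i : ℕ) + 2) (p + q - 2 - (i : ℕ))
  | .b i => (i : ℕ)
  | .c i => min ((i : ℕ) + 2) (q + r - 2 - (i : ℕ))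

/-- Distance profile from `w₁ = c 0` in `Θ_{p,q,r}` (case `p = q ≥ 2`, `r ≥ q + 3`). -/
def dC (p q r : ℕ) : ThetaVert p q r → ℕ
  | .u => 1
  | .v => p + 1
  | .a i => (i : ℕ) + 2
  | .b i => (i : ℕ) + 2
  | .c i => min (i : ℕ) (p + r - (i : ℕ))

lemma theta_adj {p q r : ℕ} {x y : ThetaVert p q r} :
    (thetaGraph p q r).Adj x y ↔ x ≠ y ∧ (thetaRel p q r x y ∨ thetaRel p q r y x) := by
  simp [thetaGraph, SimpleGraph.fromRel_adj]

section Profiles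

variable {p q r : ℕ}

lemma dB_uniq (hq2 : 2 ≤ q) (hpeq : p = q) (hr : q + 3 ≤ r) :
    ∀ x : ThetaVert p q r, dB p q r x = 0 → x = .b ⟨0, by omega⟩ := by
  intro x hx
  cases x with
  | u => simp [dB] at hx
  | v => simp [dB] at hx; omega
  | a i => have := i.isLt; simp [dB] at hx; omega
  | b i => have := i.isLt
           simp only [dB] at hx
           congr 1
           exact Fin.ext hx
  | c i => have := i.isLt; simp [dB] at hx; omega

lemma dC_uniq (hq2 : 2 ≤ q) (hpeq : p = q) (hr : q + 3 ≤ r) :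
    ∀ x : ThetaVert p q r, dC p q r x = 0 → x = .c ⟨0, by omega⟩ := by
  intro x hx
  cases x with
  | u => simp [dC] at hx
  | v => simp [dC] at hx
  | a i => simp [dC] at hx
  | b i => simp [dC] at hx
  | c i => have := i.isLt
           simp only [dC] at hx
           congr 1
           refine Fin.ext ?_
           show (i : ℕ) = 0
           omega

lemma dB_lip (hq2 : 2 ≤ q) (hpeq : p = q) (hr : q + 3 ≤ r) :
    ∀ x y : ThetaVert p q r, (thetaGraph p q r).Adj x y → dB p q r y ≤ dB p q r x + 1 := by
  intro x y hxy
  rw [theta_adj] at hxy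
  obtain ⟨hne, h⟩ := hxy
  cases x <;> cases y <;>
    simp only [thetaRel, dB, or_self, false_or, or_false] at h ⊢ <;>
    omega

lemma dC_lip (hq2 : 2 ≤ q) (hpeq : p = q) (hr : q + 3 ≤ r) :
    ∀ x y : ThetaVert p q r, (thetaGraph p q r).Adj x y → dC p q r y ≤ dC p q r x + 1 := by
  intro x y hxy
  rw [theta_adj] at hxy
  obtain ⟨hne, h⟩ := hxy
  cases x <;> cases y <;>
    simp only [thetaRel, dC, or_self, false_or, or_false] at h ⊢ <;>
    omega

end Profiles
section Dec

variable {p q r : ℕ}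

lemma dB_dec (hq2 : 2 ≤ q) (hpeq : p = q) (hr : q + 3 ≤ r) :
    ∀ x : ThetaVert p q r, dB p q r x ≠ 0 →
      ∃ y, (thetaGraph p q r).Adj y x ∧ dB p q r y + 1 = dB p q r x := by
  intro x hx
  cases x with
  | u =>
    refine ⟨.b ⟨0, by omega⟩, ?_, by simp [dB]⟩
    rw [theta_adj]
    exact ⟨by simp, Or.inr (by simp [thetaRel])⟩
  | v =>
    refine ⟨.b ⟨q - 2, by omega⟩, ?_, by simp [dB]; omega⟩
    rw [theta_adj]
    exact ⟨by simp, Or.inl (by simp [thetaRel])⟩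
  | b i =>
    have hi := i.isLt
    simp only [dB] at hx
    refine ⟨.b ⟨(i : ℕ) - 1, by omega⟩, ?_, by simp [dB]; omega⟩
    rw [theta_adj]
    refine ⟨?_, Or.inl (by simp [thetaRel]; omega)⟩
    simp only [ne_eq, ThetaVert.b.injEq]
    intro h
    have := congrArg Fin.val h
    simp at this
    omega
  | a i =>
    have hi := i.isLt
    by_cases hc : (i : ℕ) + 2 ≤ p + q - 2 - (i : ℕ)
    · by_cases h0 : (i : ℕ) = 0
      · refine ⟨.u, ?_, by simp [dB]; omega⟩
        rw [theta_adj]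
        exact ⟨by simp, Or.inl (by simp [thetaRel, h0])⟩
      · refine ⟨.a ⟨(i : ℕ) - 1, by omega⟩, ?_, by simp [dB]; omega⟩
        rw [theta_adj]
        refine ⟨?_, Or.inl (by simp [thetaRel]; omega)⟩
        simp only [ne_eq, ThetaVert.a.injEq]
        intro h
        have := congrArg Fin.val h
        simp at this
        omega
    · by_cases h0 : (i : ℕ) = p - 2
      · refine ⟨.v, ?_, by simp [dB]; omega⟩
        rw [theta_adj]
        exact ⟨by simp, Or.inr (by simp [thetaRel, h0])⟩
      · refine ⟨.a ⟨(i : ℕ) + 1, by omega⟩, ?_, by simp [dB]; omega⟩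
        rw [theta_adj]
        refine ⟨?_, Or.inr (by simp [thetaRel])⟩
        simp only [ne_eq, ThetaVert.a.injEq]
        intro h
        have := congrArg Fin.val h
        simp at this
  | c i =>
    have hi := i.isLt
    by_cases hc : (i : ℕ) + 2 ≤ q + r - 2 - (i : ℕ)
    · by_cases h0 : (i : ℕ) = 0
      · refine ⟨.u, ?_, by simp [dB]; omega⟩
        rw [theta_adj]
        exact ⟨by simp, Or.inl (by simp [thetaRel, h0])⟩
      · refine ⟨.c ⟨(i : ℕ) - 1, by omega⟩, ?_, by simp [dB]; omega⟩
        rw [theta_adj]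
        refine ⟨?_, Or.inl (by simp [thetaRel]; omega)⟩
        simp only [ne_eq, ThetaVert.c.injEq]
        intro h
        have := congrArg Fin.val h
        simp at this
        omega
    · by_cases h0 : (i : ℕ) = r - 2
      · refine ⟨.v, ?_, by simp [dB]; omega⟩
        rw [theta_adj]
        exact ⟨by simp, Or.inr (by simp [thetaRel, h0])⟩
      · refine ⟨.c ⟨(i : ℕ) + 1, by omega⟩, ?_, by simp [dB]; omega⟩
        rw [theta_adj]
        refine ⟨?_, Or.inr (by simp [thetaRel])⟩
        simp only [ne_eq, ThetaVert.c.injEq]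
        intro h
        have := congrArg Fin.val h
        simp at this

lemma dC_dec (hq2 : 2 ≤ q) (hpeq : p = q) (hr : q + 3 ≤ r) :
    ∀ x : ThetaVert p q r, dC p q r x ≠ 0 →
      ∃ y, (thetaGraph p q r).Adj y x ∧ dC p q r y + 1 = dC p q r x := by
  intro x hx
  cases x with
  | u =>
    refine ⟨.c ⟨0, by omega⟩, ?_, by simp [dC]⟩
    rw [theta_adj]
    exact ⟨by simp, Or.inr (by simp [thetaRel])⟩
  | v =>
    refine ⟨.a ⟨p - 2, by omega⟩, ?_, by simp [dC]; omega⟩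
    rw [theta_adj]
    exact ⟨by simp, Or.inl (by simp [thetaRel])⟩
  | a i =>
    have hi := i.isLt
    by_cases h0 : (i : ℕ) = 0
    · refine ⟨.u, ?_, by simp [dC]; omega⟩
      rw [theta_adj]
      exact ⟨by simp, Or.inl (by simp [thetaRel, h0])⟩
    · refine ⟨.a ⟨(i : ℕ) - 1, by omega⟩, ?_, by simp [dC]; omega⟩
      rw [theta_adj]
      refine ⟨?_, Or.inl (by simp [thetaRel]; omega)⟩
      simp only [ne_eq, ThetaVert.a.injEq]
      intro h
      have := congrArg Fin.val h
      simp at this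
      omega
  | b i =>
    have hi := i.isLt
    by_cases h0 : (i : ℕ) = 0
    · refine ⟨.u, ?_, by simp [dC]; omega⟩
      rw [theta_adj]
      exact ⟨by simp, Or.inl (by simp [thetaRel, h0])⟩
    · refine ⟨.b ⟨(i : ℕ) - 1, by omega⟩, ?_, by simp [dC]; omega⟩
      rw [theta_adj]
      refine ⟨?_, Or.inl (by simp [thetaRel]; omega)⟩
      simp only [ne_eq, ThetaVert.b.injEq]
      intro h
      have := congrArg Fin.val h
      simp at this
      omega
  | c i =>
    have hi := i.isLt
    simp only [dC] at hx
    by_cases hc : (i : ℕ) ≤ p + r - (i : ℕ)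
    · refine ⟨.c ⟨(i : ℕ) - 1, by omega⟩, ?_, by simp [dC]; omega⟩
      rw [theta_adj]
      refine ⟨?_, Or.inl (by simp [thetaRel]; omega)⟩
      simp only [ne_eq, ThetaVert.c.injEq]
      intro h
      have := congrArg Fin.val h
      simp at this
      omega
    · by_cases h0 : (i : ℕ) = r - 2
      · refine ⟨.v, ?_, by simp [dC]; omega⟩
        rw [theta_adj]
        exact ⟨by simp, Or.inr (by simp [thetaRel, h0])⟩
      · refine ⟨.c ⟨(i : ℕ) + 1, by omega⟩, ?_, by simp [dC]; omega⟩
        rw [theta_adj]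
        refine ⟨?_, Or.inr (by simp [thetaRel])⟩
        simp only [ne_eq, ThetaVert.c.injEq]
        intro h
        have := congrArg Fin.val h
        simp at this

end Dec
section DistLemmas

variable {p q r : ℕ}

lemma dist_vV1 (hq2 : 2 ≤ q) (hpeq : p = q) (hr : q + 3 ≤ r) (x : ThetaVert p q r) :
    (thetaGraph p q r).dist (vV p q r 1) x = dB p q r x := by
  have hv : vV p q r 1 = ThetaVert.b ⟨0, by omega⟩ := by
    unfold vV
    rw [dif_pos ⟨Nat.one_pos, by omega⟩]
  rw [hv]
  refine dist_eq_of_D (thetaGraph p q r) _ (dB p q r) (by simp [dB]) (dB_uniq hq2 hpeq hr)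
    (dB_lip hq2 hpeq hr) (dB_dec hq2 hpeq hr) x

lemma dist_wV1 (hq2 : 2 ≤ q) (hpeq : p = q) (hr : q + 3 ≤ r) (x : ThetaVert p q r) :
    (thetaGraph p q r).dist (wV p q r 1) x = dC p q r x := by
  have hv : wV p q r 1 = ThetaVert.c ⟨0, by omega⟩ := by
    unfold wV
    rw [dif_pos ⟨Nat.one_pos, by omega⟩]
  rw [hv]
  refine dist_eq_of_D (thetaGraph p q r) _ (dC p q r) (by simp [dC])
    (dC_uniq hq2 hpeq hr) (dC_lip hq2 hpeq hr) (dC_dec hq2 hpeq hr) x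

end DistLemmas

section Shape

variable {p q r : ℕ}

lemma aEq {i : Fin (p - 1)} {n : ℕ} (hn : n < p - 1) (h : (i : ℕ) = n) :
    (ThetaVert.a i : ThetaVert p q r) = .a ⟨n, hn⟩ := by subst h; rfl

lemma bEq {i : Fin (q - 1)} {n : ℕ} (hn : n < q - 1) (h : (i : ℕ) = n) :
    (ThetaVert.b i : ThetaVert p q r) = .b ⟨n, hn⟩ := by subst h; rfl

lemma cEq {i : Fin (r - 1)} {n : ℕ} (hn : n < r - 1) (h : (i : ℕ) = n) :
    (ThetaVert.c i : ThetaVert p q r) = .c ⟨n, hn⟩ := by subst h; rfl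

lemma edge_shape (hq2 : 2 ≤ q) (hpeq : p = q) (hr : q + 3 ≤ r)
    {x y : ThetaVert p q r} (h : (thetaGraph p q r).Adj x y) :
    s(x, y) = s(.u, .a ⟨0, by omega⟩) ∨
    s(x, y) = s(.u, .b ⟨0, by omega⟩) ∨
    s(x, y) = s(.u, .c ⟨0, by omega⟩) ∨
    (∃ (i : ℕ) (h1 : i < p - 1) (h2 : i + 1 < p - 1),
        s(x, y) = s(.a ⟨i, h1⟩, .a ⟨i + 1, h2⟩)) ∨
    (∃ (i : ℕ) (h1 : i < q - 1) (h2 : i + 1 < q - 1),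
        s(x, y) = s(.b ⟨i, h1⟩, .b ⟨i + 1, h2⟩)) ∨
    (∃ (i : ℕ) (h1 : i < r - 1) (h2 : i + 1 < r - 1),
        s(x, y) = s(.c ⟨i, h1⟩, .c ⟨i + 1, h2⟩)) ∨
    s(x, y) = s(.a ⟨p - 2, by omega⟩, .v) ∨
    s(x, y) = s(.b ⟨q - 2, by omega⟩, .v) ∨
    s(x, y) = s(.c ⟨r - 2, by omega⟩, .v) := by
  rw [theta_adj] at h
  obtain ⟨hne, h⟩ := h
  cases x with
  | u =>
    cases y with
    | u => simp [thetaRel] at h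
    | v => simp only [thetaRel, or_false] at h; omega
    | a i =>
      simp only [thetaRel, or_false] at h
      exact Or.inl (by rw [aEq (by omega) h])
    | b i =>
      simp only [thetaRel, or_false] at h
      exact Or.inr (Or.inl (by rw [bEq (by omega) h]))
    | c i =>
      simp only [thetaRel, or_false] at h
      exact Or.inr (Or.inr (Or.inl (by rw [cEq (by omega) h])))
  | v =>
    cases y with
    | u => simp only [thetaRel, false_or] at h; omega
    | v => simp [thetaRel] at h
    | a i =>
      simp only [thetaRel, false_or] at h
      refine Or.inr (Or.inr (Or.inr (Or.inr (Or.inr (Or.inr (Or.inl ?_))))))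
      rw [Sym2.eq_swap, aEq (by omega) h]
    | b i =>
      simp only [thetaRel, false_or] at h
      refine Or.inr (Or.inr (Or.inr (Or.inr (Or.inr (Or.inr (Or.inr (Or.inl ?_)))))))
      rw [Sym2.eq_swap, bEq (by omega) h]
    | c i =>
      simp only [thetaRel, false_or] at h
      refine Or.inr (Or.inr (Or.inr (Or.inr (Or.inr (Or.inr (Or.inr (Or.inr ?_)))))))
      rw [Sym2.eq_swap, cEq (by omega) h]
  | a i =>
    cases y with
    | u =>
      simp only [thetaRel, false_or] at h
      exact Or.inl (by rw [Sym2.eq_swap, aEq (by omega) h])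
    | v =>
      simp only [thetaRel, or_false] at h
      refine Or.inr (Or.inr (Or.inr (Or.inr (Or.inr (Or.inr (Or.inl ?_))))))
      rw [aEq (by omega) h]
    | a j =>
      simp only [thetaRel] at h
      rcases h with h | h
      · refine Or.inr (Or.inr (Or.inr (Or.inl ⟨(i : ℕ), i.isLt,
          by have := j.isLt; omega, ?_⟩)))
        rw [aEq (by have := j.isLt; omega) h]
      · refine Or.inr (Or.inr (Or.inr (Or.inl ⟨(j : ℕ), j.isLt,
          by have := i.isLt; omega, ?_⟩)))
        rw [Sym2.eq_swap, aEq (by have := i.isLt; omega) h]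
    | b j => simp [thetaRel] at h
    | c j => simp [thetaRel] at h
  | b i =>
    cases y with
    | u =>
      simp only [thetaRel, false_or] at h
      exact Or.inr (Or.inl (by rw [Sym2.eq_swap, bEq (by omega) h]))
    | v =>
      simp only [thetaRel, or_false] at h
      refine Or.inr (Or.inr (Or.inr (Or.inr (Or.inr (Or.inr (Or.inr (Or.inl ?_)))))))
      rw [bEq (by omega) h]
    | b j =>
      simp only [thetaRel] at h
      rcases h with h | h
      · refine Or.inr (Or.inr (Or.inr (Or.inr (Or.inl ⟨(i : ℕ), i.isLt,
          by have := j.isLt; omega, ?_⟩))))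
        rw [bEq (by have := j.isLt; omega) h]
      · refine Or.inr (Or.inr (Or.inr (Or.inr (Or.inl ⟨(j : ℕ), j.isLt,
          by have := i.isLt; omega, ?_⟩))))
        rw [Sym2.eq_swap, bEq (by have := i.isLt; omega) h]
    | a j => simp [thetaRel] at h
    | c j => simp [thetaRel] at h
  | c i =>
    cases y with
    | u =>
      simp only [thetaRel, false_or] at h
      exact Or.inr (Or.inr (Or.inl (by rw [Sym2.eq_swap, cEq (by omega) h])))
    | v =>
      simp only [thetaRel, or_false] at h
      refine Or.inr (Or.inr (Or.inr (Or.inr (Or.inr (Or.inr (Or.inr (Or.inr ?_)))))))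
      rw [cEq (by omega) h]
    | c j =>
      simp only [thetaRel] at h
      rcases h with h | h
      · refine Or.inr (Or.inr (Or.inr (Or.inr (Or.inr (Or.inl ⟨(i : ℕ), i.isLt,
          by have := j.isLt; omega, ?_⟩)))))
        rw [cEq (by have := j.isLt; omega) h]
      · refine Or.inr (Or.inr (Or.inr (Or.inr (Or.inr (Or.inl ⟨(j : ℕ), j.isLt,
          by have := i.isLt; omega, ?_⟩)))))
        rw [Sym2.eq_swap, cEq (by have := i.isLt; omega) h]
    | a j => simp [thetaRel] at h
    | b j => simp [thetaRel] at h

end Shape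
/-- Edge-distance profile w.r.t. `dB`, at the `Sym2` level. -/
def eB (p q r : ℕ) : Sym2 (ThetaVert p q r) → ℕ :=
  Sym2.lift ⟨fun a b => min (dB p q r a) (dB p q r b), fun _ _ => min_comm _ _⟩

/-- Edge-distance profile w.r.t. `dC`, at the `Sym2` level. -/
def eC (p q r : ℕ) : Sym2 (ThetaVert p q r) → ℕ :=
  Sym2.lift ⟨fun a b => min (dC p q r a) (dC p q r b), fun _ _ => min_comm _ _⟩

lemma eB_mk {p q r : ℕ} (x y : ThetaVert p q r) :
    eB p q r s(x, y) = min (dB p q r x) (dB p q r y) := rfl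

lemma eC_mk {p q r : ℕ} (x y : ThetaVert p q r) :
    eC p q r s(x, y) = min (dC p q r x) (dC p q r y) := rfl

/-- The `n`-th edge of path `t` of the Θ-graph (0 = first path, 1 = second, else third). -/
def edgeOf (p q r : ℕ) : ℕ → ℕ → Sym2 (ThetaVert p q r)
  | 0, n => s(uV p q r n, uV p q r (n + 1))
  | 1, n => s(vV p q r n, vV p q r (n + 1))
  | _ + 2, n => s(wV p q r n, wV p q r (n + 1))

/-- The value of `eB` on the `n`-th edge of path `t`. -/
def fB (p q r : ℕ) : ℕ → ℕ → ℕ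
  | 0, n => min (n + 1) (p + q - 2 - n)
  | 1, n => n - 1
  | _ + 2, n => min (n + 1) (q + r - 2 - n)

/-- The value of `eC` on the `n`-th edge of path `t`. -/
def fC (p q r : ℕ) : ℕ → ℕ → ℕ
  | 0, n => n + 1
  | 1, n => n + 1
  | _ + 2, n => min (n - 1) (p + r - n)

/-- Profile injectivity: the pair `(fB, fC)` determines the edge code. -/
lemma theta_arith {p q r : ℕ} (hq2 : 2 ≤ q) (hpeq : p = q) (hr : q + 3 ≤ r)
    {t n t' n' : ℕ}
    (hb : (t = 0 ∧ n < p) ∨ (t = 1 ∧ n < q) ∨ (t = 2 ∧ n < r))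
    (hb' : (t' = 0 ∧ n' < p) ∨ (t' = 1 ∧ n' < q) ∨ (t' = 2 ∧ n' < r))
    (h1 : fB p q r t n = fB p q r t' n')
    (h2 : fC p q r t n = fC p q r t' n') : t = t' ∧ n = n' := by
  rcases hb with ⟨rfl, hn⟩ | ⟨rfl, hn⟩ | ⟨rfl, hn⟩ <;>
    rcases hb' with ⟨rfl, hn'⟩ | ⟨rfl, hn'⟩ | ⟨rfl, hn'⟩ <;>
    simp only [fB, fC] at h1 h2 <;>
    omega
section Unfolds

variable {p q r : ℕ}

lemma fB0 (n : ℕ) : fB p q r 0 n = min (n + 1) (p + q - 2 - n) := rfl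
lemma fB1 (n : ℕ) : fB p q r 1 n = n - 1 := rfl
lemma fB2 (n : ℕ) : fB p q r 2 n = min (n + 1) (q + r - 2 - n) := rfl
lemma fC0 (n : ℕ) : fC p q r 0 n = n + 1 := rfl
lemma fC1 (n : ℕ) : fC p q r 1 n = n + 1 := rfl
lemma fC2 (n : ℕ) : fC p q r 2 n = min (n - 1) (p + r - n) := rfl
lemma edgeOf0 (n : ℕ) : edgeOf p q r 0 n = s(uV p q r n, uV p q r (n + 1)) := rfl
lemma edgeOf1 (n : ℕ) : edgeOf p q r 1 n = s(vV p q r n, vV p q r (n + 1)) := rfl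
lemma edgeOf2 (n : ℕ) : edgeOf p q r 2 n = s(wV p q r n, wV p q r (n + 1)) := rfl

end Unfolds

lemma shape2 {p q r : ℕ} (hq2 : 2 ≤ q) (hpeq : p = q) (hr : q + 3 ≤ r)
    {x y : ThetaVert p q r} (h : (thetaGraph p q r).Adj x y) :
    ∃ t n : ℕ, ((t = 0 ∧ n < p) ∨ (t = 1 ∧ n < q) ∨ (t = 2 ∧ n < r)) ∧
      s(x, y) = edgeOf p q r t n ∧
      eB p q r s(x, y) = fB p q r t n ∧
      eC p q r s(x, y) = fC p q r t n := by
  rcases edge_shape hq2 hpeq hr h with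
    h|h|h|⟨i,hi1,hi2,h⟩|⟨i,hi1,hi2,h⟩|⟨i,hi1,hi2,h⟩|h|h|h
  · refine ⟨0, 0, Or.inl ⟨rfl, by omega⟩, ?_, ?_, ?_⟩
    · rw [h, edgeOf0]
      simp [uV, show 1 < p by omega]
    · rw [h, eB_mk, fB0]; simp only [dB, Fin.val_mk]; omega
    · rw [h, eC_mk, fC0]; simp only [dC, Fin.val_mk]; omega
  · refine ⟨1, 0, Or.inr (Or.inl ⟨rfl, by omega⟩), ?_, ?_, ?_⟩
    · rw [h, edgeOf1]
      simp [vV, show 1 < q by omega]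
    · rw [h, eB_mk, fB1]; simp only [dB, Fin.val_mk]; omega
    · rw [h, eC_mk, fC1]; simp only [dC, Fin.val_mk]; omega
  · refine ⟨2, 0, Or.inr (Or.inr ⟨rfl, by omega⟩), ?_, ?_, ?_⟩
    · rw [h, edgeOf2]
      simp [wV, show 1 < r by omega]
    · rw [h, eB_mk, fB2]; simp only [dB, Fin.val_mk]; omega
    · rw [h, eC_mk, fC2]; simp only [dC, Fin.val_mk]; omega
  · refine ⟨0, i + 1, Or.inl ⟨rfl, by omega⟩, ?_, ?_, ?_⟩
    · rw [h, edgeOf0]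
      simp only [uV, dif_pos (show 0 < i + 1 ∧ i + 1 < p by omega),
        dif_pos (show 0 < i + 1 + 1 ∧ i + 1 + 1 < p by omega)]
      simp [Sym2.eq_iff]
    · rw [h, eB_mk, fB0]; simp only [dB, Fin.val_mk]; omega
    · rw [h, eC_mk, fC0]; simp only [dC, Fin.val_mk]; omega
  · refine ⟨1, i + 1, Or.inr (Or.inl ⟨rfl, by omega⟩), ?_, ?_, ?_⟩
    · rw [h, edgeOf1]
      simp only [vV, dif_pos (show 0 < i + 1 ∧ i + 1 < q by omega),
        dif_pos (show 0 < i + 1 + 1 ∧ i + 1 + 1 < q by omega)]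
      simp [Sym2.eq_iff]
    · rw [h, eB_mk, fB1]; simp only [dB, Fin.val_mk]; omega
    · rw [h, eC_mk, fC1]; simp only [dC, Fin.val_mk]; omega
  · refine ⟨2, i + 1, Or.inr (Or.inr ⟨rfl, by omega⟩), ?_, ?_, ?_⟩
    · rw [h, edgeOf2]
      simp only [wV, dif_pos (show 0 < i + 1 ∧ i + 1 < r by omega),
        dif_pos (show 0 < i + 1 + 1 ∧ i + 1 + 1 < r by omega)]
      simp [Sym2.eq_iff]
    · rw [h, eB_mk, fB2]; simp only [dB, Fin.val_mk]; omega
    · rw [h, eC_mk, fC2]; simp only [dC, Fin.val_mk]; omega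
  · refine ⟨0, p - 1, Or.inl ⟨rfl, by omega⟩, ?_, ?_, ?_⟩
    · rw [h, edgeOf0]
      simp only [uV, dif_pos (show 0 < p - 1 ∧ p - 1 < p by omega)]
      rw [dif_neg (by omega), if_neg (by omega)]
      simp [Sym2.eq_iff]
      omega
    · rw [h, eB_mk, fB0]; simp only [dB, Fin.val_mk]; omega
    · rw [h, eC_mk, fC0]; simp only [dC, Fin.val_mk]; omega
  · refine ⟨1, q - 1, Or.inr (Or.inl ⟨rfl, by omega⟩), ?_, ?_, ?_⟩
    · rw [h, edgeOf1]
      simp only [vV, dif_pos (show 0 < q - 1 ∧ q - 1 < q by omega)]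
      rw [dif_neg (by omega), if_neg (by omega)]
      simp [Sym2.eq_iff]
      omega
    · rw [h, eB_mk, fB1]; simp only [dB, Fin.val_mk]; omega
    · rw [h, eC_mk, fC1]; simp only [dC, Fin.val_mk]; omega
  · refine ⟨2, r - 1, Or.inr (Or.inr ⟨rfl, by omega⟩), ?_, ?_, ?_⟩
    · rw [h, edgeOf2]
      simp only [wV, dif_pos (show 0 < r - 1 ∧ r - 1 < r by omega)]
      rw [dif_neg (by omega), if_neg (by omega)]
      simp [Sym2.eq_iff]
      omega
    · rw [h, eB_mk, fB2]; simp only [dB, Fin.val_mk]; omega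
    · rw [h, eC_mk, fC2]; simp only [dC, Fin.val_mk]; omega

lemma theta_key {p q r : ℕ} (hq2 : 2 ≤ q) (hpeq : p = q) (hr : q + 3 ≤ r)
    {e f : Sym2 (ThetaVert p q r)} (he : e ∈ (thetaGraph p q r).edgeSet)
    (hf : f ∈ (thetaGraph p q r).edgeSet) (hne : e ≠ f) :
    eB p q r e ≠ eB p q r f ∨ eC p q r e ≠ eC p q r f := by
  induction e using Sym2.ind with | _ x y =>
  induction f using Sym2.ind with | _ x' y' =>
  rw [SimpleGraph.mem_edgeSet] at he hf
  obtain ⟨t, n, hb, hE, h1, h2⟩ := shape2 hq2 hpeq hr he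
  obtain ⟨t', n', hb', hE', h1', h2'⟩ := shape2 hq2 hpeq hr hf
  rw [← not_and_or]
  rintro ⟨g1, g2⟩
  obtain ⟨rfl, rfl⟩ := theta_arith hq2 hpeq hr hb hb' (by omega) (by omega)
  exact hne (hE.trans hE'.symm)
/-- in `Θ_{p,q,r}` with `1 ≤ p ≤ q ≤ r`, `q ≥ 2`, `p = q` and
`r ≥ p + 3`, the set `{v₁, w₁}` is an edge metric generator. -/
theorem isEdgeGenerator_case_v (p q r : ℕ)
    (hp : 1 ≤ p) (hpq : p ≤ q) (hqr : q ≤ r) (hq2 : 2 ≤ q)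
    (hpeq : p = q) (hr : p + 3 ≤ r) :
    IsEdgeMetricGenerator (thetaGraph p q r)
      {vV p q r 1, wV p q r 1} := by
  have hr' : q + 3 ≤ r := by omega
  intro e he f hf hne
  have hEB : ∀ g : Sym2 (ThetaVert p q r),
      edgeDist (thetaGraph p q r) (vV p q r 1) g = eB p q r g := by
    intro g
    induction g using Sym2.ind with | _ x y =>
    simp only [edgeDist, eB, Sym2.lift_mk, dist_vV1 hq2 hpeq hr']
  have hEC : ∀ g : Sym2 (ThetaVert p q r),
      edgeDist (thetaGraph p q r) (wV p q r 1) g = eC p q r g := by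
    intro g
    induction g using Sym2.ind with | _ x y =>
    simp only [edgeDist, eC, Sym2.lift_mk, dist_wV1 hq2 hpeq hr']
  rcases theta_key hq2 hpeq hr' he hf hne with h | h
  · exact ⟨vV p q r 1, by simp, by rw [hEB, hEB]; exact h⟩
  · exact ⟨wV p q r 1, by simp, by rw [hEC, hEC]; exact h⟩
end
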